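/- arXiv:1007.1378 — 3 statements merged into one kernel-verified Lean document; each statement's English description precedes it below -/
import Mathlib

section
/- Under the edge-insertion process for $G^*(n,m)$: let $q \in [0,1]$, $k \ge 1$, $M \ge m$, and suppose $\Pr[X_{n,M}(k) > 0] \ge 1-q$. Let $h > 2\,\mathbb{E}[X_{n,M}(k)]$. Then $\Pr\left[X_{n,m}(k) < h^{-1}\mathbb{E}[X_{n,m}(k)]\right] \le 2q$. -/
/-!
Write `ρ = (1 - (k/n)²)^(M-m)`. Given the first `m` edges, a `k`-set that is independent so far
survives each of the remaining `M - m` edges independently with probability `1 - (k/n)²`, so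
`E[X_M; A] = ρ E[X_m; A]` for every event `A` determined by the first `m` edges; in particular
`E[X_M] = ρ E[X_m]`. For `A = {X_m < E[X_m]/h}` this gives
`E[X_M; A] ≤ ρ P(A) E[X_m]/h = P(A) E[X_M]/h ≤ P(A)/2`, while
`P(A) ≤ E[X_M; A] + P(X_M = 0) ≤ E[X_M; A] + q`. Hence `P(A) ≤ 2q`.
-/

open Finset

open scoped Classical

/-- Number of independent `k`-subsets of `[n]` with respect to a list of `t` edges. -/
def indepCount (n k t : ℕ) (e : Fin t → Fin n × Fin n) : ℕ :=
  (((Finset.univ : Finset (Fin n)).powersetCard k).filter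
    (fun S => ∀ j, ¬((e j).1 ∈ S ∧ (e j).2 ∈ S))).card

section IndepCount

variable {n k : ℕ}

theorem card_filter_notMem_product_self (S : Finset (Fin n)) :
    #(univ.filter fun x : Fin n × Fin n => ¬(x.1 ∈ S ∧ x.2 ∈ S)) = n ^ 2 - #S ^ 2 := by
  have : (univ.filter fun x : Fin n × Fin n => ¬(x.1 ∈ S ∧ x.2 ∈ S)) = (S ×ˢ S)ᶜ := by
    ext; simp
  rw [this, card_compl, card_product, Fintype.card_prod, Fintype.card_fin]
  ring_nf

theorem card_filter_forall_notMem_product_self (S : Finset (Fin n)) (d : ℕ) :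
    #(univ.filter fun v : Fin d → Fin n × Fin n => ∀ i, ¬((v i).1 ∈ S ∧ (v i).2 ∈ S))
      = (n ^ 2 - #S ^ 2) ^ d := by
  rw [← card_filter_notMem_product_self, ← Fintype.card_piFinset_const]
  congr 1
  ext v
  simp [Fintype.mem_piFinset]

theorem sum_indepCount_append {m : ℕ} (u : Fin m → Fin n × Fin n) (d : ℕ) :
    ∑ v : Fin d → Fin n × Fin n, indepCount n k (m + d) (Fin.append u v)
      = (n ^ 2 - k ^ 2) ^ d * indepCount n k m u := by
  have hsplit : ∀ v : Fin d → Fin n × Fin n, indepCount n k (m + d) (Fin.append u v)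
      = ∑ S ∈ (univ.powersetCard k).filter (fun S => ∀ j, ¬((u j).1 ∈ S ∧ (u j).2 ∈ S)),
          if ∀ i, ¬((v i).1 ∈ S ∧ (v i).2 ∈ S) then 1 else 0 := by
    intro v
    rw [indepCount, ← card_filter, filter_filter]
    simp [Fin.forall_fin_add]
  simp_rw [hsplit]
  rw [sum_comm, indepCount, card_eq_sum_ones, mul_sum, mul_one]
  refine sum_congr rfl fun S hS => ?_
  rw [← card_filter, card_filter_forall_notMem_product_self,
    (mem_powersetCard.1 (mem_filter.1 hS).1).2]

theorem sum_filter_castAdd {E R : Type*} [Fintype E] [AddCommMonoid R] {m d : ℕ}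
    (P : (Fin m → E) → Prop) [DecidablePred P] (f : (Fin (m + d) → E) → R) :
    ∑ ω ∈ univ.filter (fun ω : Fin (m + d) → E => P (fun j => ω (Fin.castAdd d j))), f ω
      = ∑ u ∈ univ.filter P, ∑ v, f (Fin.append u v) := by
  rw [sum_filter, ← (Fin.appendEquiv m d).sum_comp, Fintype.sum_prod_type, sum_filter]
  refine sum_congr rfl fun u _ => ?_
  simp only [Fin.appendEquiv, Equiv.coe_fn_mk, Fin.append_left, sum_ite_irrel, sum_const_zero]

theorem pow_mul_sum_filter_indepCount {m M : ℕ} (hmM : m ≤ M)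
    (P : (Fin m → Fin n × Fin n) → Prop) [DecidablePred P] :
    (n ^ 2) ^ (M - m) * ∑ ω ∈ univ.filter (fun ω : Fin M → Fin n × Fin n =>
        P (fun j => ω (Fin.castLE hmM j))), indepCount n k M ω
      = (n ^ 2 - k ^ 2) ^ (M - m) * ∑ ω ∈ univ.filter (fun ω : Fin M → Fin n × Fin n =>
        P (fun j => ω (Fin.castLE hmM j))), indepCount n k m (fun j => ω (Fin.castLE hmM j)) := by
  obtain ⟨d, rfl⟩ := Nat.exists_eq_add_of_le hmM
  have hcast : ∀ j : Fin m, Fin.castLE hmM j = Fin.castAdd d j := fun _ => rfl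
  simp only [hcast, sum_filter_castAdd, sum_indepCount_append, Fin.append_left, sum_const,
    card_univ, Fintype.card_fun, Fintype.card_prod, Fintype.card_fin, smul_eq_mul,
    Nat.add_sub_cancel_left, ← mul_sum]
  ring

theorem sum_filter_indepCount_eq {m M : ℕ} (hn : 0 < n) (hkn : k ≤ n) (hmM : m ≤ M)
    (P : (Fin m → Fin n × Fin n) → Prop) [DecidablePred P] :
    ∑ ω ∈ univ.filter (fun ω : Fin M → Fin n × Fin n =>
        P (fun j => ω (Fin.castLE hmM j))), (indepCount n k M ω : ℝ)
      = (1 - ((k : ℝ) / n) ^ 2) ^ (M - m) * ∑ ω ∈ univ.filter (fun ω : Fin M → Fin n × Fin n =>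
        P (fun j => ω (Fin.castLE hmM j))),
          (indepCount n k m (fun j => ω (Fin.castLE hmM j)) : ℝ) := by
  have h := congrArg (Nat.cast : ℕ → ℝ) (pow_mul_sum_filter_indepCount (k := k) hmM P)
  push_cast [Nat.cast_sub (Nat.pow_le_pow_left hkn 2)] at h
  have hn' : ((n : ℝ) ^ 2) ^ (M - m) ≠ 0 := by positivity
  have hρ : (1 - ((k : ℝ) / n) ^ 2) ^ (M - m)
      = ((n : ℝ) ^ 2 - k ^ 2) ^ (M - m) / ((n : ℝ) ^ 2) ^ (M - m) := by
    rw [← div_pow]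
    congr 1
    field_simp
  rw [hρ, div_mul_eq_mul_div, eq_div_iff hn', mul_comm, h]

end IndepCount

theorem card_le_sum_add_card_filter_eq_zero {Ω : Type*} [Fintype Ω] (A : Finset Ω)
    (Y : Ω → ℕ) : #A ≤ ∑ ω ∈ A, Y ω + #(univ.filter fun ω => Y ω = 0) := by
  rw [← card_filter_add_card_filter_not (s := A) (p := fun ω => Y ω ≠ 0)]
  gcongr
  · calc #(A.filter fun ω => Y ω ≠ 0) = ∑ ω ∈ A.filter (fun ω => Y ω ≠ 0), (1 : ℕ) :=
          card_eq_sum_ones _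
      _ ≤ ∑ ω ∈ A.filter (fun ω => Y ω ≠ 0), Y ω :=
          sum_le_sum fun ω hω => Nat.one_le_iff_ne_zero.2 (mem_filter.1 hω).2
      _ ≤ ∑ ω ∈ A, Y ω := sum_le_sum_of_subset (filter_subset _ _)
  · simp only [not_not]
    exact filter_subset_filter _ (subset_univ A)

theorem card_filter_eq_zero_add_card_filter_pos {Ω : Type*} [Fintype Ω] (Y : Ω → ℕ) :
    #(univ.filter fun ω => Y ω = 0) + #(univ.filter fun ω => 0 < Y ω) = Fintype.card Ω := by
  simp_rw [Nat.pos_iff_ne_zero]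
  exact card_filter_add_card_filter_not _

theorem card_le_two_mul_card_filter_eq_zero {Ω : Type*} [Fintype Ω] (X Y : Ω → ℕ)
    (A : Finset Ω) {ρ c : ℝ} (hρ : 0 ≤ ρ) (hρc : ρ * c ≤ 1 / 2) (hX : ∀ ω ∈ A, (X ω : ℝ) < c)
    (hA : ∑ ω ∈ A, (Y ω : ℝ) = ρ * ∑ ω ∈ A, (X ω : ℝ)) :
    (#A : ℝ) ≤ 2 * #(univ.filter fun ω => Y ω = 0) := by
  have hmarkov : ∑ ω ∈ A, (X ω : ℝ) ≤ #A * c := by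
    simpa using sum_le_card_nsmul A _ c fun ω hω => (hX ω hω).le
  have hcount : (#A : ℝ) ≤ ∑ ω ∈ A, (Y ω : ℝ) + #(univ.filter fun ω => Y ω = 0) := by
    exact_mod_cast card_le_sum_add_card_filter_eq_zero A Y
  have hsmall : ρ * ∑ ω ∈ A, (X ω : ℝ) ≤ #A / 2 :=
    calc ρ * ∑ ω ∈ A, (X ω : ℝ) ≤ ρ * (#A * c) := mul_le_mul_of_nonneg_left hmarkov hρ
      _ = #A * (ρ * c) := by ring
      _ ≤ #A * (1 / 2) := mul_le_mul_of_nonneg_left hρc (by positivity)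
      _ = #A / 2 := by ring
  linarith

theorem stmt_8_general (n k m M : ℕ) (hn : 0 < n) (hkn : k ≤ n) (hmM : m ≤ M)
    (q h : ℝ)
    (hh : h > 2 * ((∑ ω : Fin M → Fin n × Fin n, (indepCount n k M ω : ℝ))
        / (Fintype.card (Fin M → Fin n × Fin n) : ℝ)))
    (hpos : (((Finset.univ : Finset (Fin M → Fin n × Fin n)).filter
        (fun ω => 0 < indepCount n k M ω)).card : ℝ)
        / (Fintype.card (Fin M → Fin n × Fin n) : ℝ) ≥ 1 - q) :
    (((Finset.univ : Finset (Fin M → Fin n × Fin n)).filter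
        (fun ω => (indepCount n k m (fun j => ω (Fin.castLE hmM j)) : ℝ)
          < ((∑ ω' : Fin M → Fin n × Fin n,
              (indepCount n k m (fun j => ω' (Fin.castLE hmM j)) : ℝ))
            / (Fintype.card (Fin M → Fin n × Fin n) : ℝ)) / h)).card : ℝ)
      / (Fintype.card (Fin M → Fin n × Fin n) : ℝ) ≤ 2 * q := by
  set N := (Fintype.card (Fin M → Fin n × Fin n) : ℝ)
  set Em := (∑ ω : Fin M → Fin n × Fin n,
    (indepCount n k m (fun j => ω (Fin.castLE hmM j)) : ℝ)) / N
  set ρ := (1 - ((k : ℝ) / n) ^ 2) ^ (M - m)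
  have hN : 0 < N := by
    have : Nonempty (Fin M → Fin n × Fin n) := ⟨fun _ => (⟨0, hn⟩, ⟨0, hn⟩)⟩
    exact Nat.cast_pos.2 Fintype.card_pos
  have hρ : 0 ≤ ρ := pow_nonneg (sub_nonneg.2 (pow_le_one₀ (by positivity)
    (div_le_one_of_le₀ (by exact_mod_cast hkn) (by positivity)))) _
  have hmean : (∑ ω, (indepCount n k M ω : ℝ)) / N = ρ * Em := by
    rw [mul_div_assoc']
    congr 1
    simpa using sum_filter_indepCount_eq hn hkn hmM (fun _ => True)
  have hρc : ρ * (Em / h) ≤ 1 / 2 := by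
    have hh0 : 0 < h := lt_of_le_of_lt (by positivity) hh
    rw [← mul_div_assoc, ← hmean, div_le_iff₀ hh0]
    linarith
  have hzero : (#(univ.filter fun ω => indepCount n k M ω = 0) : ℝ) ≤ q * N := by
    have hsplit : (#(univ.filter fun ω => indepCount n k M ω = 0) : ℝ)
        + #(univ.filter fun ω => 0 < indepCount n k M ω) = N := by
      rw [← Nat.cast_add, card_filter_eq_zero_add_card_filter_pos]
    rw [ge_iff_le, le_div_iff₀ hN] at hpos
    linarith
  have hlow := card_le_two_mul_card_filter_eq_zero _ _ _ hρ hρc (fun ω hω => (mem_filter.1 hω).2)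
    (sum_filter_indepCount_eq hn hkn hmM (fun e => (indepCount n k m e : ℝ) < Em / h))
  rw [div_le_iff₀ hN]
  linarith

/-- If independent `k`-sets still exist after `M` edges with probability `≥ 1-q`,
and `h > 2 E[X_{n,M}(k)]`, then `Pr[X_{n,m}(k) < E[X_{n,m}(k)]/h] ≤ 2q`. -/
theorem stmt_8 (n k m M : ℕ) (hn : 0 < n) (hk1 : 1 ≤ k) (hkn : k ≤ n) (hmM : m ≤ M)
    (q h : ℝ) (hq0 : 0 ≤ q) (hq1 : q ≤ 1)
    (hh : h > 2 * ((∑ ω : Fin M → Fin n × Fin n, (indepCount n k M ω : ℝ))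
        / (Fintype.card (Fin M → Fin n × Fin n) : ℝ)))
    (hpos : (((Finset.univ : Finset (Fin M → Fin n × Fin n)).filter
        (fun ω => 0 < indepCount n k M ω)).card : ℝ)
        / (Fintype.card (Fin M → Fin n × Fin n) : ℝ) ≥ 1 - q) :
    (((Finset.univ : Finset (Fin M → Fin n × Fin n)).filter
        (fun ω => (indepCount n k m (fun j => ω (Fin.castLE hmM j)) : ℝ)
          < ((∑ ω' : Fin M → Fin n × Fin n,
              (indepCount n k m (fun j => ω' (Fin.castLE hmM j)) : ℝ))
            / (Fintype.card (Fin M → Fin n × Fin n) : ℝ)) / h)).card : ℝ)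
      / (Fintype.card (Fin M → Fin n × Fin n) : ℝ) ≤ 2 * q :=
  stmt_8_general n k m M hn hkn hmM q h hh hpos
end

section
/- Collider correctness (deterministic): let $G$ be a graph and $\sigma, \tau$ independent sets of $G$ of size $k$ admitting an augmenting vertex $v$. Then the vertex sets $\sigma'', \tau''$ returned by the Collider procedure satisfy: (1) both are independent sets of $G$ of size $k$; (2) $|\sigma'' \cap \tau''| = |\sigma \cap \tau| + 1$; (3) there exist independent sets $\sigma', \tau'$ of size $k+1$ with $\sigma \subset \sigma' \supset \sigma''$ and $\tau \subset \tau' \supset \tau''$ up to bounded symmetric difference (each consecutive pair has Hamming distance at most $20d$, assuming $|N_v \cap \sigma|, |N_v \cap \tau| \le 7d$). -/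
/-!
Phase 1 trades the neighbours of `v` in `σ` for `v` and the terminal set, which has the same size,
so `σ'` gains exactly one vertex. It stays independent because a terminal vertex has a single
neighbour in `σ`, and that neighbour is a neighbour of `v`, hence was removed. Both sides contain
`v` and the untouched common part `σ ∩ τ` (no vertex of which is adjacent to `v`), while the
terminal sets meet neither the other side nor each other; Phase 2 never removes a vertex of
`{v} ∪ (σ ∩ τ)`, so the intersection grows by exactly `v`.
-/

open Finset
open scoped symmDiff

theorem Finset.forall_imp_of_card_filter_le {α : Type*} {s : Finset α} {p q : α → Prop}
    [DecidablePred p] [DecidablePred q]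
    (h : (s.filter p).card ≤ (s.filter fun x => p x ∧ q x).card) :
    ∀ a ∈ s, p a → q a := by
  rw [← filter_filter] at h
  intro a ha hpa
  exact (card_filter_eq_iff.1 (le_antisymm (card_filter_le _ _) h)) a (mem_filter.2 ⟨ha, hpa⟩)

theorem Finset.card_symmDiff_erase_le {α : Type*} [DecidableEq α] (s : Finset α) (a : α) :
    (s ∆ s.erase a).card ≤ 1 := by
  calc (s ∆ s.erase a).card ≤ ({a} : Finset α).card :=
        card_le_card fun x hx => by
          simp only [mem_symmDiff, mem_erase, mem_singleton] at hx ⊢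
          tauto
    _ = 1 := card_singleton a

namespace Collider

variable {V : Type*} [DecidableEq V] (G : SimpleGraph V) [DecidableRel G.Adj]

/-- The set `σ'` produced by Phase 1 from `σ`, the augmenting vertex `v` and the terminal set `I`. -/
def augment (σ I : Finset V) (v : V) : Finset V :=
  (σ \ σ.filter (fun u => G.Adj v u)) ∪ I ∪ {v}

variable {G}

theorem card_augment {σ I : Finset V} {v : V} (hv : v ∉ σ) (hIσ : Disjoint I σ) (hvI : v ∉ I)
    (hIcard : I.card = (σ.filter (fun u => G.Adj v u)).card) :
    (augment G σ I v).card = σ.card + 1 := by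
  have hN : (σ.filter (fun u => G.Adj v u)).card ≤ σ.card := card_filter_le _ _
  rw [augment, card_union_of_disjoint, card_union_of_disjoint, card_sdiff_of_subset
    (filter_subset _ _), card_singleton, hIcard]
  · omega
  · exact hIσ.symm.mono_left sdiff_subset
  · rw [disjoint_singleton_right, mem_union, mem_sdiff]
    tauto

theorem augment_indep {σ I : Finset V} {v : V}
    (hσ : ∀ a ∈ σ, ∀ b ∈ σ, ¬ G.Adj a b) (hI : ∀ a ∈ I, ∀ b ∈ I, ¬ G.Adj a b)
    (hvI : ∀ w ∈ I, ¬ G.Adj v w) (hIσ : ∀ w ∈ I, ∀ a ∈ σ, G.Adj w a → G.Adj v a) :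
    ∀ a ∈ augment G σ I v, ∀ b ∈ augment G σ I v, ¬ G.Adj a b := by
  have hkept : ∀ a ∈ σ, a ∉ σ.filter (fun u => G.Adj v u) → ¬ G.Adj v a :=
    fun a ha haN hva => haN (mem_filter.2 ⟨ha, hva⟩)
  intro a ha b hb hab
  simp only [augment, mem_union, mem_sdiff, mem_singleton] at ha hb
  rcases ha with ((⟨haσ, haN⟩ | haI) | rfl) <;> rcases hb with ((⟨hbσ, hbN⟩ | hbI) | rfl)
  · exact hσ a haσ b hbσ hab
  · exact hkept a haσ haN (hIσ b hbI a haσ hab.symm)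
  · exact hkept a haσ haN hab.symm
  · exact hkept b hbσ hbN (hIσ a haI b hbσ hab)
  · exact hI a haI b hbI hab
  · exact hvI a haI hab.symm
  · exact hkept b hbσ hbN hab
  · exact hvI b hbI hab
  · exact G.loopless.irrefl _ hab

theorem card_symmDiff_augment_le (σ I : Finset V) (v : V) :
    (σ ∆ augment G σ I v).card ≤ (σ.filter (fun u => G.Adj v u)).card + I.card + 1 := by
  have hremoved : σ \ augment G σ I v ⊆ σ.filter (fun u => G.Adj v u) := by
    intro a ha
    simp only [augment, mem_sdiff, mem_union] at ha
    tauto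
  have hadded : augment G σ I v \ σ ⊆ I ∪ {v} := by
    intro a ha
    simp only [augment, mem_sdiff, mem_union] at ha ⊢
    tauto
  calc (σ ∆ augment G σ I v).card
      ≤ (σ \ augment G σ I v).card + (augment G σ I v \ σ).card := card_union_le _ _
    _ ≤ (σ.filter (fun u => G.Adj v u)).card + (I ∪ {v}).card :=
        add_le_add (card_le_card hremoved) (card_le_card hadded)
    _ ≤ (σ.filter (fun u => G.Adj v u)).card + I.card + 1 := by
        grw [card_union_le, card_singleton, add_assoc]

theorem augment_inter_augment {σ τ Iσ Iτ : Finset V} {v : V}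
    (hvστ : ∀ u ∈ σ ∩ τ, ¬ G.Adj v u) (hIσ : Disjoint Iσ τ) (hIτ : Disjoint Iτ σ)
    (hIστ : Disjoint Iσ Iτ) :
    augment G σ Iσ v ∩ augment G τ Iτ v = insert v (σ ∩ τ) := by
  ext u
  have h1 := hvστ u
  have h2 : u ∈ Iσ → u ∉ τ := fun h => disjoint_left.1 hIσ h
  have h3 : u ∈ Iτ → u ∉ σ := fun h => disjoint_left.1 hIτ h
  have h4 : u ∈ Iσ → u ∉ Iτ := fun h => disjoint_left.1 hIστ h
  simp only [augment, mem_inter, mem_union, mem_sdiff, mem_filter, mem_singleton, mem_insert]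
    at h1 ⊢
  tauto

end Collider

open Collider in
theorem stmt_14_general {V : Type*} [DecidableEq V] (G : SimpleGraph V)
    [DecidableRel G.Adj] (k d : ℕ) (hd : 1 ≤ d) (σ τ : Finset V) (v : V)
    (Iσ Iτ : Finset V) (wσ wτ : V)
    (hσk : σ.card = k) (hτk : τ.card = k)
    (hσind : ∀ a ∈ σ, ∀ b ∈ σ, ¬ G.Adj a b)
    (hτind : ∀ a ∈ τ, ∀ b ∈ τ, ¬ G.Adj a b)
    (hv : v ∉ σ ∪ τ)
    (hvστ : ∀ u ∈ σ ∩ τ, ¬ G.Adj v u)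
    (hIσout : ∀ w ∈ Iσ, w ∉ σ ∪ τ ∧ w ≠ v)
    (hIσcard : Iσ.card = (σ.filter (fun u => G.Adj v u)).card)
    (hNvσ7d : (σ.filter (fun u => G.Adj v u)).card ≤ 7 * d)
    (hIσv : ∀ w ∈ Iσ, ¬ G.Adj v w)
    (hIσind : ∀ a ∈ Iσ, ∀ b ∈ Iσ, ¬ G.Adj a b)
    (hIσdeg : ∀ w ∈ Iσ, (σ.filter (fun u => G.Adj w u)).card = 1 ∧
      (σ.filter (fun u => G.Adj w u ∧ G.Adj v u)).card = 1)
    (hIτout : ∀ w ∈ Iτ, w ∉ σ ∪ τ ∧ w ≠ v)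
    (hIτcard : Iτ.card = (τ.filter (fun u => G.Adj v u)).card)
    (hNvτ7d : (τ.filter (fun u => G.Adj v u)).card ≤ 7 * d)
    (hIτv : ∀ w ∈ Iτ, ¬ G.Adj v w)
    (hIτind : ∀ a ∈ Iτ, ∀ b ∈ Iτ, ¬ G.Adj a b)
    (hIτdeg : ∀ w ∈ Iτ, (τ.filter (fun u => G.Adj w u)).card = 1 ∧
      (τ.filter (fun u => G.Adj w u ∧ G.Adj v u)).card = 1)
    (hIστ : Disjoint Iσ Iτ)
    (hwσ : wσ ∈ (σ \ σ.filter (fun u => G.Adj v u)) ∪ Iσ ∪ {v} ∧ wσ ≠ v ∧ wσ ∉ σ ∩ τ)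
    (hwτ : wτ ∈ (τ \ τ.filter (fun u => G.Adj v u)) ∪ Iτ ∪ {v} ∧ wτ ≠ v ∧ wτ ∉ σ ∩ τ) :
    let σ' := (σ \ σ.filter (fun u => G.Adj v u)) ∪ Iσ ∪ {v}
    let τ' := (τ \ τ.filter (fun u => G.Adj v u)) ∪ Iτ ∪ {v}
    let σ'' := σ'.erase wσ
    let τ'' := τ'.erase wτ
    (σ''.card = k ∧ τ''.card = k ∧
      (∀ a ∈ σ'', ∀ b ∈ σ'', ¬ G.Adj a b) ∧ (∀ a ∈ τ'', ∀ b ∈ τ'', ¬ G.Adj a b)) ∧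
    (σ'' ∩ τ'').card = (σ ∩ τ).card + 1 ∧
    (σ'.card = k + 1 ∧ τ'.card = k + 1 ∧
      (∀ a ∈ σ', ∀ b ∈ σ', ¬ G.Adj a b) ∧ (∀ a ∈ τ', ∀ b ∈ τ', ¬ G.Adj a b) ∧
      ((σ \ σ') ∪ (σ' \ σ)).card ≤ 20 * d ∧ ((σ' \ σ'') ∪ (σ'' \ σ')).card ≤ 20 * d ∧
      ((τ \ τ') ∪ (τ' \ τ)).card ≤ 20 * d ∧ ((τ' \ τ'') ∪ (τ'' \ τ')).card ≤ 20 * d) := by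
  intro σ' τ' σ'' τ''
  have hIσ : Disjoint Iσ (σ ∪ τ) := disjoint_left.2 fun w hw => (hIσout w hw).1
  have hIτ : Disjoint Iτ (σ ∪ τ) := disjoint_left.2 fun w hw => (hIτout w hw).1
  have hσ'card : σ'.card = k + 1 := hσk ▸ card_augment
    (fun h => hv (mem_union_left _ h)) (hIσ.mono_right subset_union_left)
    (fun h => (hIσout v h).2 rfl) hIσcard
  have hτ'card : τ'.card = k + 1 := hτk ▸ card_augment
    (fun h => hv (mem_union_right _ h)) (hIτ.mono_right subset_union_right)
    (fun h => (hIτout v h).2 rfl) hIτcard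
  have hσ'ind : ∀ a ∈ σ', ∀ b ∈ σ', ¬ G.Adj a b := augment_indep hσind hIσind hIσv
    fun w hw => forall_imp_of_card_filter_le ((hIσdeg w hw).1.trans (hIσdeg w hw).2.symm).le
  have hτ'ind : ∀ a ∈ τ', ∀ b ∈ τ', ¬ G.Adj a b := augment_indep hτind hIτind hIτv
    fun w hw => forall_imp_of_card_filter_le ((hIτdeg w hw).1.trans (hIτdeg w hw).2.symm).le
  have hinter'' : σ'' ∩ τ'' = insert v (σ ∩ τ) := by
    have hinter : σ' ∩ τ' = insert v (σ ∩ τ) := augment_inter_augment hvστ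
      (hIσ.mono_right subset_union_right) (hIτ.mono_right subset_union_left) hIστ
    have hwσ' : wσ ∉ insert v (σ ∩ τ) := by simpa only [mem_insert, not_or] using hwσ.2
    have hwτ' : wτ ∉ insert v (σ ∩ τ) := by simpa only [mem_insert, not_or] using hwτ.2
    rw [erase_inter, inter_erase, hinter, erase_eq_of_notMem hwτ', erase_eq_of_notMem hwσ']
  refine ⟨⟨?_, ?_, ?_, ?_⟩, ?_, hσ'card, hτ'card, hσ'ind, hτ'ind, ?_, ?_, ?_, ?_⟩
  · rw [card_erase_of_mem hwσ.1, hσ'card, Nat.add_sub_cancel]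
  · rw [card_erase_of_mem hwτ.1, hτ'card, Nat.add_sub_cancel]
  · exact fun a ha b hb => hσ'ind a (mem_of_mem_erase ha) b (mem_of_mem_erase hb)
  · exact fun a ha b hb => hτ'ind a (mem_of_mem_erase ha) b (mem_of_mem_erase hb)
  · rw [hinter'', card_insert_of_notMem fun h => hv (mem_union_left _ (mem_inter.1 h).1)]
  · exact (card_symmDiff_augment_le σ Iσ v).trans (by omega)
  · exact (card_symmDiff_erase_le σ' wσ).trans (by omega)
  · exact (card_symmDiff_augment_le τ Iτ v).trans (by omega)
  · exact (card_symmDiff_erase_le τ' wτ).trans (by omega)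

/-- Deterministic correctness of the Collider procedure: given independent sets
`σ, τ` of size `k` with an augmenting vertex `v` (with terminal sets `Iσ, Iτ`),
the sets `σ'' , τ''` returned by Collider are independent sets of size `k`, their
intersection grows by one, and the intermediate sets `σ', τ'` are independent sets
of size `k+1` at Hamming distance at most `20d` from their neighbours in the chain. -/
theorem stmt_14 {V : Type*} [Fintype V] [DecidableEq V] (G : SimpleGraph V)
    [DecidableRel G.Adj] (k d : ℕ) (hd : 1 ≤ d) (σ τ : Finset V) (v : V)
    (Iσ Iτ : Finset V) (wσ wτ : V)
    (hσk : σ.card = k) (hτk : τ.card = k)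
    (hσind : ∀ a ∈ σ, ∀ b ∈ σ, ¬ G.Adj a b)
    (hτind : ∀ a ∈ τ, ∀ b ∈ τ, ¬ G.Adj a b)
    (hv : v ∉ σ ∪ τ)
    (hvστ : ∀ u ∈ σ ∩ τ, ¬ G.Adj v u)
    (hIσout : ∀ w ∈ Iσ, w ∉ σ ∪ τ ∧ w ≠ v)
    (hIσcard : Iσ.card = (σ.filter (fun u => G.Adj v u)).card)
    (hIσ7d : Iσ.card ≤ 7 * d)
    (hNvσ7d : (σ.filter (fun u => G.Adj v u)).card ≤ 7 * d)
    (hIσv : ∀ w ∈ Iσ, ¬ G.Adj v w)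
    (hIσind : ∀ a ∈ Iσ, ∀ b ∈ Iσ, ¬ G.Adj a b)
    (hIσdeg : ∀ w ∈ Iσ, (σ.filter (fun u => G.Adj w u)).card = 1 ∧
      (σ.filter (fun u => G.Adj w u ∧ G.Adj v u)).card = 1)
    (hIτout : ∀ w ∈ Iτ, w ∉ σ ∪ τ ∧ w ≠ v)
    (hIτcard : Iτ.card = (τ.filter (fun u => G.Adj v u)).card)
    (hIτ7d : Iτ.card ≤ 7 * d)
    (hNvτ7d : (τ.filter (fun u => G.Adj v u)).card ≤ 7 * d)
    (hIτv : ∀ w ∈ Iτ, ¬ G.Adj v w)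
    (hIτind : ∀ a ∈ Iτ, ∀ b ∈ Iτ, ¬ G.Adj a b)
    (hIτdeg : ∀ w ∈ Iτ, (τ.filter (fun u => G.Adj w u)).card = 1 ∧
      (τ.filter (fun u => G.Adj w u ∧ G.Adj v u)).card = 1)
    (hIστ : Disjoint Iσ Iτ)
    (hwσ : wσ ∈ (σ \ σ.filter (fun u => G.Adj v u)) ∪ Iσ ∪ {v} ∧ wσ ≠ v ∧ wσ ∉ σ ∩ τ)
    (hwτ : wτ ∈ (τ \ τ.filter (fun u => G.Adj v u)) ∪ Iτ ∪ {v} ∧ wτ ≠ v ∧ wτ ∉ σ ∩ τ) :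
    let σ' := (σ \ σ.filter (fun u => G.Adj v u)) ∪ Iσ ∪ {v}
    let τ' := (τ \ τ.filter (fun u => G.Adj v u)) ∪ Iτ ∪ {v}
    let σ'' := σ'.erase wσ
    let τ'' := τ'.erase wτ
    (σ''.card = k ∧ τ''.card = k ∧
      (∀ a ∈ σ'', ∀ b ∈ σ'', ¬ G.Adj a b) ∧ (∀ a ∈ τ'', ∀ b ∈ τ'', ¬ G.Adj a b)) ∧
    (σ'' ∩ τ'').card = (σ ∩ τ).card + 1 ∧
    (σ'.card = k + 1 ∧ τ'.card = k + 1 ∧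
      (∀ a ∈ σ', ∀ b ∈ σ', ¬ G.Adj a b) ∧ (∀ a ∈ τ', ∀ b ∈ τ', ¬ G.Adj a b) ∧
      ((σ \ σ') ∪ (σ' \ σ)).card ≤ 20 * d ∧ ((σ' \ σ'') ∪ (σ'' \ σ')).card ≤ 20 * d ∧
      ((τ \ τ') ∪ (τ' \ τ)).card ≤ 20 * d ∧ ((τ' \ τ'') ∪ (τ'' \ τ')).card ≤ 20 * d) :=
  stmt_14_general G k d hd σ τ v Iσ Iτ wσ wτ hσk hτk hσind hτind hv hvστ hIσout hIσcard hNvσ7d hIσv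
    hIσind hIσdeg hIτout hIτcard hNvτ7d hIτv hIτind hIτdeg hIστ hwσ hwτ
end

section
/- Total-weight concentration for the Metropolis stationary distribution (local quadratic decay): fix $d$ large and $\lambda_c > 0$, write sizes as $k_{-\epsilon} = \frac{2n}{d}(\ln d - \ln\ln d + 1 - \ln 2 - \epsilon)$, and let $f(\epsilon) = \frac{1}{n}\ln \mathbb{E}[|\mathcal{S}_{k_{-\epsilon}}(G^*(n,m))| \lambda_c^{k_{-\epsilon}}]$. If $\epsilon'$ maximizes the smooth approximation $h(\epsilon) = \frac{2}{d}y(\epsilon)(\ln\lambda_c + \epsilon - \ln(y(\epsilon)/\ln d))$ with $y(\epsilon) = \ln d - \ln\ln d + 1 - \ln 2 - \epsilon$, then for $|q| < (\ln d)^{1/3}$, $h(\epsilon' + q) \le h(\epsilon') - \frac{3}{2d}q^2$. -/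
/-- `y(ε) = ln d - ln ln d + 1 - ln 2 - ε`. -/
noncomputable def yfun (d ε : ℝ) : ℝ :=
  Real.log d - Real.log (Real.log d) + 1 - Real.log 2 - ε

/-- `h(ε) = (2/d) y(ε) (ln λ_c + ε - ln(y(ε)/ln d))`. -/
noncomputable def hfun (d lamc ε : ℝ) : ℝ :=
  2 / d * yfun d ε * (Real.log lamc + ε - Real.log (yfun d ε / Real.log d))

/-!
With `u = y(ε)`, `(d/2) h = u (c - u) - u ln u` for a constant `c`, so the tangent-line bound
`u ln u ≥ v ln v + (ln v + 1)(u - v)` for the convex function `u ln u` gives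
`h(ε + q) ≤ h(ε) + q h'(ε) - (2/d) q²` as long as `y` stays positive. At the interior
maximizer `ε'` the derivative `h'(ε')` vanishes, and `2/d ≥ 3/(2d)`.
-/

open Real

noncomputable def hfunDeriv (d lamc ε : ℝ) : ℝ :=
  2 / d * (yfun d ε + 1 - log lamc - ε + log (yfun d ε / log d))

lemma yfun_add (d ε q : ℝ) : yfun d (ε + q) = yfun d ε - q := by
  simp only [yfun]; ring

lemma hasDerivAt_yfun (d ε : ℝ) : HasDerivAt (yfun d) (-1) ε :=
  (hasDerivAt_id' ε).const_sub (log d - log (log d) + 1 - log 2)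

lemma hasDerivAt_hfun {d lamc ε : ℝ} (hy : yfun d ε ≠ 0) (hD : log d ≠ 0) :
    HasDerivAt (hfun d lamc) (hfunDeriv d lamc ε) ε := by
  have hy' := hasDerivAt_yfun d ε
  have hlog := (hy'.div_const (log d)).log (div_ne_zero hy hD)
  have h := (hy'.const_mul (2 / d)).mul (((hasDerivAt_id' ε).const_add (log lamc)).sub hlog)
  have hderiv : hfunDeriv d lamc ε = 2 / d * -1 * (log lamc + ε - log (yfun d ε / log d)) +
      2 / d * yfun d ε * (1 - -1 / log d / (yfun d ε / log d)) := by
    unfold hfunDeriv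
    field_simp
    ring
  rw [hderiv]
  exact h

lemma mul_log_sub_mul_log_ge {u v : ℝ} (hu : 0 < u) (hv : 0 < v) :
    (log v + 1) * (u - v) ≤ u * log u - v * log v := by
  have h := mul_le_mul_of_nonneg_left (one_sub_inv_le_log_of_pos (div_pos hu hv)) hu.le
  rw [log_div hu.ne' hv.ne', inv_div, mul_one_sub, mul_div_cancel₀ _ hu.ne'] at h
  nlinarith

lemma hfun_add_le_tangent_sub_sq {d lamc ε q : ℝ} (hd : 0 < d) (hD : log d ≠ 0)
    (hy : 0 < yfun d ε) (hyq : 0 < yfun d (ε + q)) :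
    hfun d lamc (ε + q) ≤ hfun d lamc ε + q * hfunDeriv d lamc ε - 2 / d * q ^ 2 := by
  rw [yfun_add] at hyq
  have hgap : hfun d lamc ε + q * hfunDeriv d lamc ε - 2 / d * q ^ 2 - hfun d lamc (ε + q) =
      2 / d * ((yfun d ε - q) * log (yfun d ε - q) - yfun d ε * log (yfun d ε) -
        (log (yfun d ε) + 1) * (yfun d ε - q - yfun d ε)) := by
    rw [hfun, hfun, hfunDeriv, yfun_add, log_div hy.ne' hD, log_div hyq.ne' hD]
    ring
  have := mul_nonneg (div_nonneg zero_le_two hd.le)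
    (sub_nonneg.mpr (mul_log_sub_mul_log_ge hyq hy))
  linarith

/-- Local quadratic decay of `h` at its maximizer `ε'`: for `d` large, if
`(1/2) ln d < y(ε) < ln d` on the window `|ε - ε'| ≤ (ln d)^{1/3}` and `ε'`
maximizes `h` there, then `h(ε'+q) ≤ h(ε') - (3/(2d)) q²` for `|q| < (ln d)^{1/3}`. -/
theorem stmt_19 : ∃ d0 : ℝ, 0 < d0 ∧ ∀ d lamc ε' : ℝ, d0 ≤ d → 0 < lamc →
    (∀ ε : ℝ, |ε - ε'| ≤ Real.log d ^ ((1 : ℝ) / 3) →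
      Real.log d / 2 < yfun d ε ∧ yfun d ε < Real.log d) →
    IsMaxOn (hfun d lamc)
      (Set.Icc (ε' - Real.log d ^ ((1 : ℝ) / 3)) (ε' + Real.log d ^ ((1 : ℝ) / 3))) ε' →
    ∀ q : ℝ, |q| < Real.log d ^ ((1 : ℝ) / 3) →
      hfun d lamc (ε' + q) ≤ hfun d lamc ε' - 3 / (2 * d) * q ^ 2 := by
  refine ⟨2, two_pos, fun d lamc ε' hd _ hy hmax q hq => ?_⟩
  have hd0 : 0 < d := by linarith
  have hD : 0 < log d := log_pos (by linarith)
  have hW : 0 < log d ^ ((1 : ℝ) / 3) := rpow_pos_of_pos hD _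
  have hy0 : 0 < yfun d ε' := by linarith [(hy ε' (by simpa using hW.le)).1]
  have hyq : 0 < yfun d (ε' + q) := by linarith [(hy (ε' + q) (by simpa using hq.le)).1]
  have hcrit : hfunDeriv d lamc ε' = 0 :=
    (hmax.isLocalMax (Icc_mem_nhds (by linarith) (by linarith))).hasDerivAt_eq_zero
      (hasDerivAt_hfun hy0.ne' hD.ne')
  have hdecay := hfun_add_le_tangent_sub_sq hd0 hD.ne' hy0 hyq (lamc := lamc)
  rw [hcrit, mul_zero, add_zero] at hdecay
  have hconst : 3 / (2 * d) * q ^ 2 ≤ 2 / d * q ^ 2 := by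
    refine mul_le_mul_of_nonneg_right ?_ (sq_nonneg q)
    rw [div_le_div_iff₀ (by positivity) hd0]
    linarith
  linarith
end
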